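/- (Time-warping invariance of the non-strict signature) Let S be an additively idempotent commutative semiring, z a d-dimensional time series over S, and 1 ≤ n ≤ T. Define τ_n(z) by (τ_n z)_j = z_j for j ≤ n and (τ_n z)_j = z_{j-1} for j > n (the entry z_n is repeated). Then ⟨ISS^{idem}_{0,T+1}(τ_n z), w⟩ = ⟨ISS^{idem}_{0,T}(z), w⟩ for every word w over the alphabet A. -/
import Mathlib


/-- The monomial `z^{⊙a}` associated to an exponent vector `a ∈ ℕ^d` and `z ∈ S^d`. -/
def monom {S : Type*} [CommSemiring S] {d : ℕ} (z : Fin d → S) (a : Fin d → ℕ) : S :=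
  ∏ i, z i ^ a i

/-- The **non-strict** iterated-sums signature coefficient
`⟨ISS^idem_{s,t}(z), w⟩ = ⊕_{s < j_1 ≤ j_2 ≤ ⋯ ≤ j_k ≤ t} z_{j_1}^{⊙w_1} ⊙ ⋯ ⊙ z_{j_k}^{⊙w_k}`. -/
def ISSI {S : Type*} [CommSemiring S] {d : ℕ} (z : ℕ → Fin d → S) :
    ℕ → ℕ → List (Fin d → ℕ) → S
  | _, _, [] => 1
  | s, t, a :: w => ∑ j ∈ Finset.Ioc s t, monom (z j) a * ISSI z (j - 1) t w

/-- The time-warped series `τ_n(z)`: the entry `z_n` is repeated. -/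
def timeWarp {S : Type*} [CommSemiring S] {d : ℕ} (n : ℕ) (z : ℕ → Fin d → S) :
    ℕ → Fin d → S :=
  fun j => if j ≤ n then z j else z (j - 1)


lemma sum_shift {M : Type*} [AddCommMonoid M] (a b : ℕ) (f : ℕ → M) :
    ∑ j ∈ Finset.Ioc (a+1) (b+1), f j = ∑ j ∈ Finset.Ioc a b, f (j+1) := by
  rw [← Finset.map_add_right_Ioc, Finset.sum_map]
  rfl

lemma lemA {S : Type*} [CommSemiring S] {d : ℕ} (z : ℕ → Fin d → S) (T n : ℕ)
    (hn : 1 ≤ n) (w : List (Fin d → ℕ)) :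
    ∀ s, n ≤ s → ISSI (timeWarp n z) s (T+1) w = ISSI z (s-1) T w := by
  induction w with
  | nil => intro s _; rfl
  | cons a w ih =>
    intro s hs
    have hs1 : 1 ≤ s := le_trans hn hs
    show (∑ j ∈ Finset.Ioc s (T+1),
        monom (timeWarp n z j) a * ISSI (timeWarp n z) (j-1) (T+1) w)
       = ∑ j ∈ Finset.Ioc (s-1) T, monom (z j) a * ISSI z (j-1) T w
    rw [show Finset.Ioc s (T+1) = Finset.Ioc ((s-1)+1) (T+1) from by
      congr 1; omega, sum_shift]
    apply Finset.sum_congr rfl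
    intro j hj
    simp only [Finset.mem_Ioc] at hj
    have hwz : timeWarp n z (j+1) = z j := by
      simp [timeWarp, Nat.not_le.mpr (show n < j+1 by omega)]
    rw [hwz, Nat.add_sub_cancel, ih j (by omega)]

lemma lemB {S : Type*} [CommSemiring S] {d : ℕ} (hidem : ∀ a : S, a + a = a)
    (z : ℕ → Fin d → S) (T n : ℕ) (hn : 1 ≤ n) (hnT : n ≤ T)
    (w : List (Fin d → ℕ)) :
    ∀ s, s < n → ISSI (timeWarp n z) s (T+1) w = ISSI z s T w := by
  induction w with
  | nil => intro s _; rfl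
  | cons a w ih =>
    intro s hs
    show (∑ j ∈ Finset.Ioc s (T+1),
        monom (timeWarp n z j) a * ISSI (timeWarp n z) (j-1) (T+1) w)
       = ∑ j ∈ Finset.Ioc s T, monom (z j) a * ISSI z (j-1) T w
    rw [← Finset.sum_Ioc_consecutive _ (le_of_lt hs) (show n ≤ T+1 by omega),
        ← Finset.sum_Ioc_consecutive _ (le_of_lt hs) hnT]
    have hS1 : (∑ j ∈ Finset.Ioc s n,
        monom (timeWarp n z j) a * ISSI (timeWarp n z) (j-1) (T+1) w)
        = ∑ j ∈ Finset.Ioc s n, monom (z j) a * ISSI z (j-1) T w := by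
      apply Finset.sum_congr rfl
      intro j hj
      simp only [Finset.mem_Ioc] at hj
      have h1 : timeWarp n z j = z j := by simp [timeWarp, hj.2]
      rw [h1, ih (j-1) (by omega)]
    have hS2 : (∑ j ∈ Finset.Ioc n (T+1),
        monom (timeWarp n z j) a * ISSI (timeWarp n z) (j-1) (T+1) w)
        = ∑ j ∈ Finset.Ioc (n-1) T, monom (z j) a * ISSI z (j-1) T w := by
      rw [show Finset.Ioc n (T+1) = Finset.Ioc ((n-1)+1) (T+1) from by
        congr 1; omega, sum_shift]
      apply Finset.sum_congr rfl
      intro j hj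
      simp only [Finset.mem_Ioc] at hj
      have hwz : timeWarp n z (j+1) = z j := by
        simp [timeWarp, Nat.not_le.mpr (show n < j+1 by omega)]
      rw [hwz, Nat.add_sub_cancel, lemA z T n hn w j (by omega)]
    rw [hS1, hS2]
    have hins : Finset.Ioc (n-1) T = insert n (Finset.Ioc n T) := by
      ext x
      simp only [Finset.mem_Ioc, Finset.mem_insert]
      omega
    rw [hins, Finset.sum_insert (by simp)]
    have hmem : n ∈ Finset.Ioc s n := Finset.mem_Ioc.mpr ⟨hs, le_rfl⟩
    rw [← Finset.add_sum_erase _ _ hmem, add_add_add_comm,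
      hidem (monom (z n) a * ISSI z (n-1) T w), ← add_assoc]

/-- **Time-warping invariance of the non-strict signature.** Let `S` be an additively
idempotent commutative semiring, `z` a `d`-dimensional time series over `S`, and
`1 ≤ n ≤ T`. Then `⟨ISS^idem_{0,T+1}(τ_n z), w⟩ = ⟨ISS^idem_{0,T}(z), w⟩` for every
word `w` over the alphabet of nonzero exponent vectors. -/
theorem issi_time_warping_invariant {S : Type*} [CommSemiring S] {d : ℕ}
    (hidem : ∀ a : S, a + a = a)
    (z : ℕ → Fin d → S) (T n : ℕ) (hn : 1 ≤ n) (hnT : n ≤ T)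
    (w : List (Fin d → ℕ)) (hw : ∀ a ∈ w, a ≠ 0) :
    ISSI (timeWarp n z) 0 (T + 1) w = ISSI z 0 T w := by
  exact lemB hidem z T n hn hnT w 0 hn
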